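/- If the sequences (α_ℓ)_{ℓ≥1} and (β_m)_{m≥0} with β₀ = E satisfy the consistency identities X(t) = 𝔸(t) + 𝔅(t)·𝔹(t) and 𝔹(t)·X(t) = ℂ(t) + 𝔻(t)·𝔹(t), then: α₃ = A₃ + B₁·β₂ + B₂·β₁ + B₃·E − (1/2)·(α₁α₂ + α₂α₁) − (1/6)·α₁³; β₃ = S⁻¹·( C₃ + D₁·β₂ + D₂·β₁ + D₃·E − (E·α₃ + β₁·α₂ + β₂·α₁) − (1/2)·(E·(α₁α₂ + α₂α₁) + β₁·α₁²) − (1/6)·E·α₁³ ); and α₄ = A₄ + B₁·β₃ + B₂·β₂ + B₃·β₁ + B₄·E − (1/2)·(α₁α₃ + α₂² + α₃α₁) − (1/6)·(α₁²α₂ + α₁α₂α₁ + α₂α₁²) − (1/24)·α₁⁴. -/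

import Mathlib

/-- `seriesPow a j p` is the coefficient of `t^p` in `F(t)^j`,
where `F(t) = Σ_{ℓ≥0} t^ℓ a_ℓ` (in the application `a 0 = 0`, so that
`F(t) = Σ_{ℓ≥1} t^ℓ a_ℓ`). -/
def seriesPow {A : Type*} [Ring A] (a : ℕ → A) : ℕ → ℕ → A
  | 0, p => if p = 0 then 1 else 0
  | j + 1, p => ∑ ij ∈ Finset.HasAntidiagonal.antidiagonal p, a ij.1 * seriesPow a j ij.2

/-- `Xcoef α p` is the coefficient of `t^p` in `X(t) = Σ_{j≥0} (1/j!) F(t)^j`,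
where `F(t) = Σ_{ℓ≥1} t^ℓ α_ℓ` (encoded by `α 0 = 0`, so that the coefficient of
`t^p` in `F(t)^j` vanishes for `j > p`). -/
def Xcoef {n : Type*} [Fintype n] [DecidableEq n] {R : Type*} [CommRing R] [Algebra ℚ R]
    (α : ℕ → Matrix n n R) (p : ℕ) : Matrix n n R :=
  ∑ j ∈ Finset.range (p + 1), ((j.factorial : ℚ)⁻¹) • seriesPow α j p

/-!
Compare coefficients of `t³` and `t⁴` in the two consistency identities. Because `α₀ = 0`,
the coefficient of `t^p` in `X(t)` is `α_p` plus a polynomial in `α₁, …, α_{p-1}`; because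
`B₀ = 0`, the coefficient of `t^p` in `X = 𝔸 + 𝔅𝔹` involves only `β₀, …, β_{p-1}`, so it
can be solved for `α_p`.
At order three, `D₀ = I − S` leaves `β₃` in `𝔹X = ℂ + 𝔻𝔹` only as `S β₃`, and the diagonal
matrix `S` with unit diagonal is invertible.
-/

section Xcoef

variable {n : Type*} [Fintype n] [DecidableEq n] {R : Type*} [CommRing R] [Algebra ℚ R]
  {α : ℕ → Matrix n n R}

lemma Xcoef_zero : Xcoef α 0 = 1 := by
  simp [Xcoef, seriesPow]

lemma Xcoef_one : Xcoef α 1 = α 1 := by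
  simp [Xcoef, seriesPow, Finset.Nat.sum_antidiagonal_eq_sum_range_succ_mk, Finset.sum_range_succ]

lemma Xcoef_two (hα0 : α 0 = 0) : Xcoef α 2 = α 2 + (2 : ℚ)⁻¹ • (α 1 * α 1) := by
  norm_num [Xcoef, seriesPow, Finset.Nat.sum_antidiagonal_eq_sum_range_succ_mk,
    Finset.sum_range_succ, hα0, Nat.factorial]

lemma Xcoef_three (hα0 : α 0 = 0) :
    Xcoef α 3 = α 3 + (2 : ℚ)⁻¹ • (α 1 * α 2 + α 2 * α 1) + (6 : ℚ)⁻¹ • (α 1 * α 1 * α 1) := by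
  norm_num [Xcoef, seriesPow, Finset.Nat.sum_antidiagonal_eq_sum_range_succ_mk,
    Finset.sum_range_succ, hα0, Nat.factorial, mul_add, mul_assoc]

lemma Xcoef_four (hα0 : α 0 = 0) :
    Xcoef α 4 = α 4 + (2 : ℚ)⁻¹ • (α 1 * α 3 + α 2 * α 2 + α 3 * α 1)
      + (6 : ℚ)⁻¹ • (α 1 * α 1 * α 2 + α 1 * α 2 * α 1 + α 2 * α 1 * α 1)
      + (24 : ℚ)⁻¹ • (α 1 * α 1 * α 1 * α 1) := by
  norm_num [Xcoef, seriesPow, Finset.Nat.sum_antidiagonal_eq_sum_range_succ_mk,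
    Finset.sum_range_succ, hα0, Nat.factorial, mul_add, mul_assoc]

end Xcoef

lemma Matrix.IsDiag.isUnit_det {n R : Type*} [Fintype n] [DecidableEq n] [CommRing R]
    {S : Matrix n n R} (hS : S.IsDiag) (hunit : ∀ i, IsUnit (S i i)) : IsUnit S.det := by
  rw [← Matrix.isUnit_iff_isUnit_det, ← hS.diagonal_diag]
  exact Matrix.isUnit_diagonal.2 (Pi.isUnit_iff.2 hunit)

theorem taylor_expansion_third_fourth_order_general (N q : ℕ)
    (R : Type*) [CommRing R] [Algebra ℚ R]
    (A : ℕ → Matrix (Fin N) (Fin N) R) (B : ℕ → Matrix (Fin N) (Fin (q - N)) R)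
    (C : ℕ → Matrix (Fin (q - N)) (Fin N) R) (D : ℕ → Matrix (Fin (q - N)) (Fin (q - N)) R)
    (E : Matrix (Fin (q - N)) (Fin N) R) (S : Matrix (Fin (q - N)) (Fin (q - N)) R)
    (hSdiag : S.IsDiag) (hSunit : ∀ i, IsUnit (S i i))
    (hB0 : B 0 = 0) (hD0 : D 0 = 1 - S)
    (α : ℕ → Matrix (Fin N) (Fin N) R) (β : ℕ → Matrix (Fin (q - N)) (Fin N) R)
    (hα0 : α 0 = 0) (hβ0 : β 0 = E)
    (hid1 : ∀ p : ℕ, Xcoef α p = A p + ∑ ij ∈ Finset.HasAntidiagonal.antidiagonal p, B ij.1 * β ij.2)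
    (hid2 : ∀ p : ℕ, ∑ ij ∈ Finset.HasAntidiagonal.antidiagonal p, β ij.1 * Xcoef α ij.2
        = C p + ∑ ij ∈ Finset.HasAntidiagonal.antidiagonal p, D ij.1 * β ij.2) :
    α 3 = A 3 + B 1 * β 2 + B 2 * β 1 + B 3 * E
        - ((2 : ℚ)⁻¹) • (α 1 * α 2 + α 2 * α 1)
        - ((6 : ℚ)⁻¹) • (α 1 * α 1 * α 1)
    ∧ β 3 = S⁻¹ * (C 3 + D 1 * β 2 + D 2 * β 1 + D 3 * E
        - (E * α 3 + β 1 * α 2 + β 2 * α 1)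
        - ((2 : ℚ)⁻¹) • (E * (α 1 * α 2 + α 2 * α 1) + β 1 * (α 1 * α 1))
        - ((6 : ℚ)⁻¹) • (E * (α 1 * α 1 * α 1)))
    ∧ α 4 = A 4 + B 1 * β 3 + B 2 * β 2 + B 3 * β 1 + B 4 * E
        - ((2 : ℚ)⁻¹) • (α 1 * α 3 + α 2 * α 2 + α 3 * α 1)
        - ((6 : ℚ)⁻¹) • (α 1 * α 1 * α 2 + α 1 * α 2 * α 1 + α 2 * α 1 * α 1)
        - ((24 : ℚ)⁻¹) • (α 1 * α 1 * α 1 * α 1) := by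
  have h3 := hid1 3
  have h4 := hid1 4
  have g3 := hid2 3
  simp only [Finset.Nat.sum_antidiagonal_eq_sum_range_succ_mk, Finset.sum_range_succ,
    Finset.sum_range_zero, Xcoef_zero, Xcoef_one, Xcoef_two hα0, Xcoef_three hα0, Xcoef_four hα0,
    hB0, hβ0, hD0, Matrix.zero_mul, zero_add, Nat.sub_zero, Nat.sub_self, Nat.reduceSub,
    Matrix.mul_add, Matrix.mul_smul, Matrix.sub_mul, Matrix.mul_one, Matrix.one_mul,
    mul_assoc] at h3 h4 g3
  refine ⟨?_, ?_, ?_⟩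
  · simp only [mul_assoc]
    linear_combination (norm := module) h3
  · rw [← Matrix.nonsing_inv_mul_cancel_left S (β 3) (hSdiag.isUnit_det hSunit)]
    congr 1
    simp only [Matrix.mul_add, mul_assoc]
    linear_combination (norm := module) g3
  · simp only [mul_assoc]
    linear_combination (norm := module) h4

/-- if `(α_ℓ)_{ℓ≥1}`, `(β_m)_{m≥0}` with `β₀ = E` satisfy
`X(t) = 𝔸(t) + 𝔅(t)𝔹(t)` and `𝔹(t)X(t) = ℂ(t) + 𝔻(t)𝔹(t)`, then `α₃`, `β₃`
and `α₄` are given by the explicit third- and fourth-order formulas. -/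
theorem taylor_expansion_third_fourth_order (N q : ℕ) (hN : 1 ≤ N) (hq : N < q)
    (R : Type*) [CommRing R] [Algebra ℚ R]
    (A : ℕ → Matrix (Fin N) (Fin N) R) (B : ℕ → Matrix (Fin N) (Fin (q - N)) R)
    (C : ℕ → Matrix (Fin (q - N)) (Fin N) R) (D : ℕ → Matrix (Fin (q - N)) (Fin (q - N)) R)
    (E : Matrix (Fin (q - N)) (Fin N) R) (S : Matrix (Fin (q - N)) (Fin (q - N)) R)
    (hSdiag : S.IsDiag) (hSunit : ∀ i, IsUnit (S i i))
    (hA0 : A 0 = 1) (hB0 : B 0 = 0) (hC0 : C 0 = S * E) (hD0 : D 0 = 1 - S)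
    (α : ℕ → Matrix (Fin N) (Fin N) R) (β : ℕ → Matrix (Fin (q - N)) (Fin N) R)
    (hα0 : α 0 = 0) (hβ0 : β 0 = E)
    (hid1 : ∀ p : ℕ, Xcoef α p = A p + ∑ ij ∈ Finset.HasAntidiagonal.antidiagonal p, B ij.1 * β ij.2)
    (hid2 : ∀ p : ℕ, ∑ ij ∈ Finset.HasAntidiagonal.antidiagonal p, β ij.1 * Xcoef α ij.2
        = C p + ∑ ij ∈ Finset.HasAntidiagonal.antidiagonal p, D ij.1 * β ij.2) :
    α 3 = A 3 + B 1 * β 2 + B 2 * β 1 + B 3 * E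
        - ((2 : ℚ)⁻¹) • (α 1 * α 2 + α 2 * α 1)
        - ((6 : ℚ)⁻¹) • (α 1 * α 1 * α 1)
    ∧ β 3 = S⁻¹ * (C 3 + D 1 * β 2 + D 2 * β 1 + D 3 * E
        - (E * α 3 + β 1 * α 2 + β 2 * α 1)
        - ((2 : ℚ)⁻¹) • (E * (α 1 * α 2 + α 2 * α 1) + β 1 * (α 1 * α 1))
        - ((6 : ℚ)⁻¹) • (E * (α 1 * α 1 * α 1)))
    ∧ α 4 = A 4 + B 1 * β 3 + B 2 * β 2 + B 3 * β 1 + B 4 * E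
        - ((2 : ℚ)⁻¹) • (α 1 * α 3 + α 2 * α 2 + α 3 * α 1)
        - ((6 : ℚ)⁻¹) • (α 1 * α 1 * α 2 + α 1 * α 2 * α 1 + α 2 * α 1 * α 1)
        - ((24 : ℚ)⁻¹) • (α 1 * α 1 * α 1 * α 1) :=
  taylor_expansion_third_fourth_order_general N q R A B C D E S hSdiag hSunit hB0 hD0 α β hα0 hβ0
    hid1 hid2
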